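/- arXiv:1603.04298 — 2 statements merged into one kernel-verified Lean document; each statement's English description precedes it below -/
import Mathlib

section
/- A nontrivial writer monad does not admit dependent Kleisli extensions: let M be a monoid with an element m ≠ 1, let A be a nonempty set, and define the family B : M × A → Type by B (1, a) = PUnit and B (m', a) = Empty for m' ≠ 1. Then the dependent function f : ∀ a : A, M × B (1, a) given by f a = (1, PUnit.unit) admits no extension f* : ∀ x : M × A, M × B x (i.e., no function g with g (1, a) = f a for all a can exist when evaluated at (m, a), since M × B (m, a) is empty). -/
/-- A nontrivial writer monad does not admit dependent Kleisli extensions: with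
`B (1, a) = PUnit` and `B (m', a) = Empty` for `m' ≠ 1`, the type of candidate extensions
`∀ x : M × A, M × B x` is empty whenever `A` is nonempty and some `m ≠ 1` exists. -/
theorem writer_no_dependent_kleisli (M : Type) [Monoid M] (m : M) (hm : m ≠ 1)
    (A : Type) [Nonempty A] (B : M × A → Type)
    (hB1 : ∀ a : A, B (1, a) = PUnit)
    (hB : ∀ (m' : M) (a : A), m' ≠ 1 → B (m', a) = Empty) :
    IsEmpty (∀ x : M × A, M × B x) := by
  constructor
  intro g
  obtain ⟨a⟩ := ‹Nonempty A›
  have h := (g (m, a)).2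
  rw [hB m a hm] at h
  exact h.elim
end

section
/- A nontrivial reader monad does not admit dependent Kleisli extensions: let S be a set with two distinct elements s₀ ≠ s₁, let A be a set with two distinct elements a₀ ≠ a₁, and define B : (S → A) → Type by B t = PLift (∀ s s', t s = t s') (the predicate that t is constant). Then the type ∀ t : S → A, B t is empty while ∀ a : A, B (fun _ => a) is inhabited, so the dependent function f a : B (fun _ => a) witnessing constancy of the constant function at a has no dependent Kleisli extension f* : ∀ t : S → A, B t. -/
/-- A nontrivial reader monad does not admit dependent Kleisli extensions: with
`B t` asserting that `t : S → A` is constant, `B (η a)` is always inhabited but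
`∀ t, B t` is empty when `S` and `A` both have two distinct elements. -/
theorem reader_no_dependent_kleisli (S A : Type) (s₀ s₁ : S) (hs : s₀ ≠ s₁)
    (a₀ a₁ : A) (ha : a₀ ≠ a₁) (B : (S → A) → Type)
    (hB : ∀ t : S → A, B t = PLift (∀ s s' : S, t s = t s')) :
    (∀ a : A, Nonempty (B (fun _ => a))) ∧ IsEmpty (∀ t : S → A, B t) := by
  constructor
  · intro a
    rw [hB]
    exact ⟨⟨fun _ _ => rfl⟩⟩
  · constructor
    intro F
    classical
    set t : S → A := fun s => if s = s₀ then a₀ else a₁ with ht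
    have h := (hB t ▸ F t).down s₀ s₁
    simp [ht, hs.symm] at h
    exact ha h
end
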